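/- Let f : I → ℝ³ be a unit speed timelike curve on S²₁ with 0 ∈ I, fix u > 0 and θ ∈ (0, π/2], set ξ = cot θ · ln u, and assume cos ξ > 0, sin ξ ≠ 0, and 1 + tan ξ·κ_g(v) > 0 for all v ∈ I. Let x(v) = u sin θ·(cos ξ·f(v) + sin ξ·(f(v) ×ₗ f'(v))) be the v-parameter curve of the timelike constant slope surface. Then the curve γ(v) = ∫₀^v x(t) dt is a spacelike Bertrand curve: ⟪γ'(v), γ'(v)⟫ > 0 for all v, and there exist nonzero real constants A, B such that A·κ(v) + B·τ(v) = 1 for all v ∈ I, where κ(v) = ‖γ'(v) ×ₗ γ''(v)‖ / ⟪γ'(v),γ'(v)⟫^{3/2} and τ(v) = det(γ'(v), γ''(v), γ'''(v)) / ‖γ'(v) ×ₗ γ''(v)‖². -/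

import Mathlib

noncomputable section

/-- Minkowski inner product ⟪x,y⟫ = x₁y₁ + x₂y₂ − x₃y₃ on ℝ³. -/
def mdot (x y : Fin 3 → ℝ) : ℝ := x 0 * y 0 + x 1 * y 1 - x 2 * y 2

/-- Lorentzian cross product x ×ₗ y. -/
def lcross (x y : Fin 3 → ℝ) : Fin 3 → ℝ :=
  ![x 1 * y 2 - x 2 * y 1, x 2 * y 0 - x 0 * y 2, x 1 * y 0 - x 0 * y 1]

/-- Determinant of the 3×3 matrix with rows x, y, z. -/
def det3 (x y z : Fin 3 → ℝ) : ℝ :=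
  x 0 * (y 1 * z 2 - y 2 * z 1) - x 1 * (y 0 * z 2 - y 2 * z 0) + x 2 * (y 0 * z 1 - y 1 * z 0)

/-- Minkowski norm ‖x‖ = √|⟪x,x⟫|. -/
def mnorm (x : Fin 3 → ℝ) : ℝ := Real.sqrt |mdot x x|

lemma lcross0 (x y : Fin 3 → ℝ) : lcross x y 0 = x 1 * y 2 - x 2 * y 1 := rfl
lemma lcross1 (x y : Fin 3 → ℝ) : lcross x y 1 = x 2 * y 0 - x 0 * y 2 := rfl
lemma lcross2 (x y : Fin 3 → ℝ) : lcross x y 2 = x 1 * y 0 - x 0 * y 1 := rfl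

lemma mdot_comm (x y : Fin 3 → ℝ) : mdot x y = mdot y x := by unfold mdot; ring

lemma mdot_smul_left (r : ℝ) (x y : Fin 3 → ℝ) : mdot (r • x) y = r * mdot x y := by
  unfold mdot; simp [Pi.smul_apply, smul_eq_mul]; ring
lemma mdot_smul_right (r : ℝ) (x y : Fin 3 → ℝ) : mdot x (r • y) = r * mdot x y := by
  unfold mdot; simp [Pi.smul_apply, smul_eq_mul]; ring
lemma mdot_add_left (x y z : Fin 3 → ℝ) : mdot (x + y) z = mdot x z + mdot y z := by
  unfold mdot; simp [Pi.add_apply]; ring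
lemma mdot_add_right (x y z : Fin 3 → ℝ) : mdot x (y + z) = mdot x y + mdot x z := by
  unfold mdot; simp [Pi.add_apply]; ring
lemma mdot_sub_right (x y z : Fin 3 → ℝ) : mdot x (y - z) = mdot x y - mdot x z := by
  unfold mdot; simp [Pi.sub_apply]; ring

lemma lcross_smul_left (r : ℝ) (x y : Fin 3 → ℝ) : lcross (r • x) y = r • lcross x y := by
  funext i; fin_cases i <;> simp [lcross, Pi.smul_apply, smul_eq_mul] <;> ring
lemma lcross_smul_right (r : ℝ) (x y : Fin 3 → ℝ) : lcross x (r • y) = r • lcross x y := by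
  funext i; fin_cases i <;> simp [lcross, Pi.smul_apply, smul_eq_mul] <;> ring
lemma lcross_add_left (x y z : Fin 3 → ℝ) : lcross (x + y) z = lcross x z + lcross y z := by
  funext i; fin_cases i <;> simp [lcross, Pi.add_apply] <;> ring
lemma lcross_add_right (x y z : Fin 3 → ℝ) : lcross x (y + z) = lcross x y + lcross x z := by
  funext i; fin_cases i <;> simp [lcross, Pi.add_apply] <;> ring
lemma lcross_self (x : Fin 3 → ℝ) : lcross x x = 0 := by
  funext i; fin_cases i <;> simp [lcross] <;> ring
lemma lcross_anticomm (x y : Fin 3 → ℝ) : lcross x y = -lcross y x := by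
  funext i; fin_cases i <;> simp [lcross, Pi.neg_apply] <;> ring

lemma mdot_lcross_lcross (x y z w : Fin 3 → ℝ) :
    mdot (lcross x y) (lcross z w) = mdot x w * mdot y z - mdot x z * mdot y w := by
  unfold mdot lcross; simp; ring

lemma det3_eq (x y z : Fin 3 → ℝ) : det3 x y z = mdot (lcross y z) x := by
  unfold det3 mdot lcross; simp; ring

lemma lcross_triple (x y z : Fin 3 → ℝ) :
    lcross x (lcross y z) = mdot x y • z - mdot x z • y := by
  funext i; fin_cases i <;>
    simp [lcross, mdot, Pi.sub_apply, Pi.smul_apply, smul_eq_mul] <;> ring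

lemma cramer3 (x y z w : Fin 3 → ℝ) :
    det3 x y z • w = det3 w y z • x + det3 x w z • y + det3 x y w • z := by
  funext i; fin_cases i <;>
    simp [det3, Pi.add_apply, Pi.smul_apply, smul_eq_mul] <;> ring

lemma det3_smul1 (r : ℝ) (x y z : Fin 3 → ℝ) : det3 (r • x) y z = r * det3 x y z := by
  unfold det3; simp [Pi.smul_apply, smul_eq_mul]; ring
lemma det3_smul2 (r : ℝ) (x y z : Fin 3 → ℝ) : det3 x (r • y) z = r * det3 x y z := by
  unfold det3; simp [Pi.smul_apply, smul_eq_mul]; ring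
lemma det3_smul3 (r : ℝ) (x y z : Fin 3 → ℝ) : det3 x y (r • z) = r * det3 x y z := by
  unfold det3; simp [Pi.smul_apply, smul_eq_mul]; ring
lemma det3_add1 (x x' y z : Fin 3 → ℝ) : det3 (x + x') y z = det3 x y z + det3 x' y z := by
  unfold det3; simp [Pi.add_apply]; ring
lemma det3_add3 (x y z z' : Fin 3 → ℝ) : det3 x y (z + z') = det3 x y z + det3 x y z' := by
  unfold det3; simp [Pi.add_apply]; ring
lemma det3_yy (x y : Fin 3 → ℝ) : det3 x y y = 0 := by unfold det3; ring
lemma det3_xyx (x y : Fin 3 → ℝ) : det3 x y x = 0 := by unfold det3; ring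
lemma mdot_neg_left (x y : Fin 3 → ℝ) : mdot (-x) y = -(mdot x y) := by unfold mdot; simp [Pi.neg_apply]; ring
lemma det3_xx (x y : Fin 3 → ℝ) : det3 x x y = 0 := by unfold det3; ring

lemma hasDerivAt_lcross' {p q : ℝ → Fin 3 → ℝ} {p' q' : Fin 3 → ℝ} {v : ℝ}
    (hp : HasDerivAt p p' v) (hq : HasDerivAt q q' v) :
    HasDerivAt (fun w => lcross (p w) (q w)) (lcross p' (q v) + lcross (p v) q') v := by
  have hpc : ∀ i, HasDerivAt (fun w => p w i) (p' i) v := fun i => hasDerivAt_pi.1 hp i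
  have hqc : ∀ i, HasDerivAt (fun w => q w i) (q' i) v := fun i => hasDerivAt_pi.1 hq i
  rw [hasDerivAt_pi]
  intro i
  fin_cases i
  · have h := (((hpc 1).mul (hqc 2)).sub ((hpc 2).mul (hqc 1)))
    convert h using 1 <;> (try funext w) <;>
    simp [lcross, Pi.add_apply] <;> ring
  · have h := (((hpc 2).mul (hqc 0)).sub ((hpc 0).mul (hqc 2)))
    convert h using 1 <;> (try funext w) <;>
    simp [lcross, Pi.add_apply] <;> ring
  · have h := (((hpc 1).mul (hqc 0)).sub ((hpc 0).mul (hqc 1)))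
    convert h using 1 <;> (try funext w) <;>
    simp [lcross, Pi.add_apply] <;> ring

lemma hasDerivAt_mdot' {p q : ℝ → Fin 3 → ℝ} {p' q' : Fin 3 → ℝ} {v : ℝ}
    (hp : HasDerivAt p p' v) (hq : HasDerivAt q q' v) :
    HasDerivAt (fun w => mdot (p w) (q w)) (mdot p' (q v) + mdot (p v) q') v := by
  have hpc : ∀ i, HasDerivAt (fun w => p w i) (p' i) v := fun i => hasDerivAt_pi.1 hp i
  have hqc : ∀ i, HasDerivAt (fun w => q w i) (q' i) v := fun i => hasDerivAt_pi.1 hq i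
  have h := ((((hpc 0).mul (hqc 0)).add ((hpc 1).mul (hqc 1))).sub ((hpc 2).mul (hqc 2)))
  convert h using 1
  all_goals first | rfl | (funext w; unfold mdot; simp; ring) | (unfold mdot; ring)

lemma hasDerivAt_det3' {p q r : ℝ → Fin 3 → ℝ} {p' q' r' : Fin 3 → ℝ} {v : ℝ}
    (hp : HasDerivAt p p' v) (hq : HasDerivAt q q' v) (hr : HasDerivAt r r' v) :
    HasDerivAt (fun w => det3 (p w) (q w) (r w))
      (det3 p' (q v) (r v) + det3 (p v) q' (r v) + det3 (p v) (q v) r') v := by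
  have hpc : ∀ i, HasDerivAt (fun w => p w i) (p' i) v := fun i => hasDerivAt_pi.1 hp i
  have hqc : ∀ i, HasDerivAt (fun w => q w i) (q' i) v := fun i => hasDerivAt_pi.1 hq i
  have hrc : ∀ i, HasDerivAt (fun w => r w i) (r' i) v := fun i => hasDerivAt_pi.1 hr i
  have h :=
    ((((hpc 0).mul (((hqc 1).mul (hrc 2)).sub ((hqc 2).mul (hrc 1)))).sub
      ((hpc 1).mul (((hqc 0).mul (hrc 2)).sub ((hqc 2).mul (hrc 0))))).add
      ((hpc 2).mul (((hqc 0).mul (hrc 1)).sub ((hqc 1).mul (hrc 0)))))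
  convert h using 1
  all_goals first | rfl | (funext w; unfold det3; simp; ring) | (unfold det3; simp; ring)

lemma continuousOn_lcross' {p q : ℝ → Fin 3 → ℝ} {s : Set ℝ}
    (hp : ContinuousOn p s) (hq : ContinuousOn q s) :
    ContinuousOn (fun w => lcross (p w) (q w)) s := by
  have hpc : ∀ i, ContinuousOn (fun w => p w i) s :=
    fun i => (continuous_apply i).comp_continuousOn hp
  have hqc : ∀ i, ContinuousOn (fun w => q w i) s :=
    fun i => (continuous_apply i).comp_continuousOn hq
  apply continuousOn_pi.2
  intro i
  fin_cases i
  · exact (((hpc 1).mul (hqc 2)).sub ((hpc 2).mul (hqc 1)))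
  · exact (((hpc 2).mul (hqc 0)).sub ((hpc 0).mul (hqc 2)))
  · exact (((hpc 1).mul (hqc 0)).sub ((hpc 0).mul (hqc 1)))

/-- Integrating the v-parameter curve x(v) = u·sinθ·(cosξ·f(v) + sinξ·(f(v) ×ₗ f'(v)))
of a timelike constant slope surface lying in the spacelike cone produces a spacelike
Bertrand curve γ(v) = ∫₀^v x: γ' is spacelike on I and there are nonzero constants A, B
with A·κ + B·τ = 1 on I. -/
theorem stmt_18 (a b : ℝ) (f : ℝ → Fin 3 → ℝ)
    (hf : ContDiffOn ℝ (⊤ : ℕ∞) f (Set.Ioo a b))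
    (hsph : ∀ v ∈ Set.Ioo a b, mdot (f v) (f v) = 1)
    (htl : ∀ v ∈ Set.Ioo a b, mdot (deriv f v) (deriv f v) = -1)
    (h0 : (0 : ℝ) ∈ Set.Ioo a b)
    (t : ℝ → Fin 3 → ℝ) (kg : ℝ → ℝ)
    (ht : t = fun w => deriv f w)
    (hkg : kg = fun w => det3 (f w) (t w) (deriv t w))
    (θ u : ℝ) (hθ : θ ∈ Set.Ioc 0 (Real.pi / 2)) (hu : 0 < u)
    (ξ : ℝ) (hξdef : ξ = Real.cos θ / Real.sin θ * Real.log u)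
    (hcos : 0 < Real.cos ξ) (hsin : Real.sin ξ ≠ 0)
    (hpos : ∀ v ∈ Set.Ioo a b, 0 < 1 + Real.tan ξ * kg v)
    (x : ℝ → Fin 3 → ℝ)
    (hx : ∀ v ∈ Set.Ioo a b,
      x v = (u * Real.sin θ) •
        (Real.cos ξ • f v + Real.sin ξ • lcross (f v) (deriv f v)))
    (γ : ℝ → Fin 3 → ℝ)
    (hγ : ∀ v ∈ Set.Ioo a b, γ v = ∫ w in (0:ℝ)..v, x w)
    (K T : ℝ → ℝ)
    (hK : K = fun v => mnorm (lcross (deriv γ v) (deriv (deriv γ) v))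
        / Real.sqrt (mdot (deriv γ v) (deriv γ v)) ^ 3)
    (hT : T = fun v => det3 (deriv γ v) (deriv (deriv γ) v) (deriv (deriv (deriv γ)) v)
        / mnorm (lcross (deriv γ v) (deriv (deriv γ) v)) ^ 2) :
    (∀ v ∈ Set.Ioo a b, 0 < mdot (deriv γ v) (deriv γ v)) ∧
    ∃ A B : ℝ, A ≠ 0 ∧ B ≠ 0 ∧ ∀ v ∈ Set.Ioo a b, A * K v + B * T v = 1 := by
  obtain ⟨hθ0, hθ2⟩ := hθ
  set s : Set ℝ := Set.Ioo a b with hsdef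
  have hso : IsOpen s := isOpen_Ioo
  set c : ℝ := u * Real.sin θ with hcdef
  have hsinθ : 0 < Real.sin θ :=
    Real.sin_pos_of_pos_of_lt_pi hθ0 (lt_of_le_of_lt hθ2 (by linarith [Real.pi_pos]))
  have hc : 0 < c := mul_pos hu hsinθ
  set co := Real.cos ξ with hcodef
  set si := Real.sin ξ with hsidef
  have hsc : si ^ 2 + co ^ 2 = 1 := Real.sin_sq_add_cos_sq ξ
  -- smoothness of derivatives of f
  have hf1 : ContDiffOn ℝ (⊤ : ℕ∞) (deriv f) s := hf.deriv_of_isOpen hso (by simp)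
  have hf2 : ContDiffOn ℝ (⊤ : ℕ∞) (deriv (deriv f)) s := hf1.deriv_of_isOpen hso (by simp)
  have hdf : ∀ v ∈ s, HasDerivAt f (deriv f v) v := fun v hv =>
    ((hf.differentiableOn (by simp)).differentiableAt (hso.mem_nhds hv)).hasDerivAt
  have hdf1 : ∀ v ∈ s, HasDerivAt (deriv f) (deriv (deriv f) v) v := fun v hv =>
    ((hf1.differentiableOn (by simp)).differentiableAt (hso.mem_nhds hv)).hasDerivAt
  have hdf2 : ∀ v ∈ s, HasDerivAt (deriv (deriv f)) (deriv (deriv (deriv f)) v) v := fun v hv =>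
    ((hf2.differentiableOn (by simp)).differentiableAt (hso.mem_nhds hv)).hasDerivAt
  have hkg2 : ∀ w, kg w = det3 (f w) (deriv f w) (deriv (deriv f) w) := by
    intro w; rw [hkg]; subst ht; rfl
  -- gram relations
  have hFT : ∀ v ∈ s, mdot (f v) (deriv f v) = 0 := by
    intro v hv
    have h1 := hasDerivAt_mdot' (hdf v hv) (hdf v hv)
    have h2 : (fun w => mdot (f w) (f w)) =ᶠ[nhds v] (fun _ => (1:ℝ)) :=
      Filter.eventuallyEq_of_mem (hso.mem_nhds hv) (fun w hw => hsph w hw)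
    have h3 : deriv (fun w => mdot (f w) (f w)) v = 0 := by
      rw [h2.deriv_eq]; simp
    have h4 := h1.deriv
    rw [h3] at h4
    have h5 := mdot_comm (deriv f v) (f v)
    linarith
  have hFF2 : ∀ v ∈ s, mdot (f v) (deriv (deriv f) v) = 1 := by
    intro v hv
    have h1 := hasDerivAt_mdot' (hdf v hv) (hdf1 v hv)
    have h2 : (fun w => mdot (f w) (deriv f w)) =ᶠ[nhds v] (fun _ => (0:ℝ)) :=
      Filter.eventuallyEq_of_mem (hso.mem_nhds hv) (fun w hw => hFT w hw)
    have h3 : deriv (fun w => mdot (f w) (deriv f w)) v = 0 := by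
      rw [h2.deriv_eq]; simp
    have h4 := h1.deriv
    rw [h3] at h4
    have h5 := mdot_comm (deriv f v) (deriv f v)
    have h6 := htl v hv
    linarith
  have hTF2 : ∀ v ∈ s, mdot (deriv f v) (deriv (deriv f) v) = 0 := by
    intro v hv
    have h1 := hasDerivAt_mdot' (hdf1 v hv) (hdf1 v hv)
    have h2 : (fun w => mdot (deriv f w) (deriv f w)) =ᶠ[nhds v] (fun _ => (-1:ℝ)) :=
      Filter.eventuallyEq_of_mem (hso.mem_nhds hv) (fun w hw => htl w hw)
    have h3 : deriv (fun w => mdot (deriv f w) (deriv f w)) v = 0 := by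
      rw [h2.deriv_eq]; simp
    have h4 := h1.deriv
    rw [h3] at h4
    have h5 := mdot_comm (deriv (deriv f) v) (deriv f v)
    linarith
  -- frame decomposition of f''
  have hF2eq : ∀ v ∈ s,
      deriv (deriv f) v = f v + kg v • lcross (f v) (deriv f v) := by
    intro v hv
    have hTS : lcross (deriv f v) (lcross (f v) (deriv f v)) = f v := by
      rw [lcross_triple]
      rw [mdot_comm (deriv f v) (f v), hFT v hv, htl v hv]
      simp
    have hd1 : det3 (f v) (deriv f v) (lcross (f v) (deriv f v)) = 1 := by
      rw [det3_eq, hTS, hsph v hv]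
    have hd2 : det3 (deriv (deriv f) v) (deriv f v) (lcross (f v) (deriv f v)) = 1 := by
      rw [det3_eq, hTS]; exact hFF2 v hv
    have hd3 : det3 (f v) (deriv (deriv f) v) (lcross (f v) (deriv f v)) = 0 := by
      rw [det3_eq, lcross_triple]
      rw [mdot_comm (deriv (deriv f) v) (f v), hFF2 v hv,
        mdot_comm (deriv (deriv f) v) (deriv f v), hTF2 v hv]
      simp [mdot_sub_right, mdot_smul_right, mdot_comm (deriv f v) (f v), hFT v hv]
    have hcr := cramer3 (f v) (deriv f v) (lcross (f v) (deriv f v)) (deriv (deriv f) v)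
    rw [hd1, hd2, hd3, ← hkg2 v] at hcr
    simpa using hcr
  -- continuity of x on s
  have hxcont : ContinuousOn x s := by
    have hg : ContinuousOn
        (fun w => c • (co • f w + si • lcross (f w) (deriv f w))) s := by
      refine ContinuousOn.const_smul ?_ c
      apply ContinuousOn.add
      · exact ContinuousOn.const_smul (hf.continuousOn) co
      · exact ContinuousOn.const_smul
          (continuousOn_lcross' hf.continuousOn hf1.continuousOn) si
    exact hg.congr (fun w hw => hx w hw)
  -- first derivative of γ
  have key1 : ∀ v ∈ s, HasDerivAt γ (x v) v := by
    intro v hv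
    have hsub : Set.uIcc (0:ℝ) v ⊆ s := Set.ordConnected_Ioo.uIcc_subset h0 hv
    have hint : IntervalIntegrable x MeasureTheory.volume 0 v :=
      (hxcont.mono hsub).intervalIntegrable
    have hmeas := ContinuousOn.stronglyMeasurableAtFilter (μ := MeasureTheory.volume) hso hxcont v hv
    have hca : ContinuousAt x v := hxcont.continuousAt (hso.mem_nhds hv)
    have hI := intervalIntegral.integral_hasDerivAt_right hint hmeas hca
    exact hI.congr_of_eventuallyEq
      (Filter.eventuallyEq_of_mem (hso.mem_nhds hv) (fun w hw => hγ w hw))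
  have hd1 : ∀ v ∈ s, deriv γ v = c • (co • f v + si • lcross (f v) (deriv f v)) := by
    intro v hv
    rw [(key1 v hv).deriv]
    exact hx v hv
  -- second derivative
  have key2 : ∀ v ∈ s, deriv (deriv γ) v
      = (c * co + c * si * kg v) • deriv f v := by
    intro v hv
    have hg : HasDerivAt
        (fun w => c • (co • f w + si • lcross (f w) (deriv f w)))
        (c • (co • deriv f v + si • (lcross (deriv f v) (deriv f v)
          + lcross (f v) (deriv (deriv f) v)))) v :=
      ((((hdf v hv).const_smul co).add
        ((hasDerivAt_lcross' (hdf v hv) (hdf1 v hv)).const_smul si)).const_smul c)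
    have hgg : HasDerivAt (deriv γ)
        (c • (co • deriv f v + si • (lcross (deriv f v) (deriv f v)
          + lcross (f v) (deriv (deriv f) v)))) v :=
      hg.congr_of_eventuallyEq
        (Filter.eventuallyEq_of_mem (hso.mem_nhds hv) (fun w hw => hd1 w hw))
    rw [hgg.deriv, lcross_self]
    rw [hF2eq v hv, lcross_add_right, lcross_self, lcross_smul_right]
    have hFS : lcross (f v) (lcross (f v) (deriv f v)) = deriv f v := by
      rw [lcross_triple, hsph v hv, hFT v hv]
      simp
    rw [hFS]
    funext i
    simp [Pi.smul_apply, Pi.add_apply, smul_eq_mul]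
    ring
  -- third derivative
  have hkgdiff : ∀ v ∈ s, DifferentiableAt ℝ kg v := by
    intro v hv
    have h := hasDerivAt_det3' (hdf v hv) (hdf1 v hv) (hdf2 v hv)
    have : DifferentiableAt ℝ (fun w => det3 (f w) (deriv f w) (deriv (deriv f) w)) v :=
      h.differentiableAt
    exact this.congr_of_eventuallyEq (by
      filter_upwards with w
      rw [hkg2 w])
  have key3 : ∀ v ∈ s, deriv (deriv (deriv γ)) v
      = (c * co + c * si * kg v) • deriv (deriv f) v
        + (deriv (fun w => c * co + c * si * kg w) v) • deriv f v := by
    intro v hv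
    have hM : HasDerivAt (fun w => c * co + c * si * kg w)
        (deriv (fun w => c * co + c * si * kg w) v) v := by
      have : DifferentiableAt ℝ (fun w => c * co + c * si * kg w) v :=
        (differentiableAt_const _).add ((hkgdiff v hv).const_mul (c * si))
      exact this.hasDerivAt
    have hg := hM.smul (hdf1 v hv)
    have hgg : HasDerivAt (deriv (deriv γ))
        ((c * co + c * si * kg v) • deriv (deriv f) v
          + (deriv (fun w => c * co + c * si * kg w) v) • deriv f v) v :=
      hg.congr_of_eventuallyEq
        (Filter.eventuallyEq_of_mem (hso.mem_nhds hv) (fun w hw => key2 w hw))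
    exact hgg.deriv
  -- pointwise scalar computations
  have hsq : ∀ v ∈ s, mdot (deriv γ v) (deriv γ v) = c ^ 2 := by
    intro v hv
    rw [hd1 v hv]
    have hSS : mdot (lcross (f v) (deriv f v)) (lcross (f v) (deriv f v)) = 1 := by
      rw [mdot_lcross_lcross, hFT v hv, mdot_comm (deriv f v) (f v), hFT v hv,
        hsph v hv, htl v hv]
      ring
    have hFS : mdot (f v) (lcross (f v) (deriv f v)) = 0 := by
      rw [mdot_comm, ← det3_eq, det3_xx]
    have hSF : mdot (lcross (f v) (deriv f v)) (f v) = 0 := by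
      rw [← det3_eq, det3_xx]
    rw [mdot_smul_left, mdot_smul_right, mdot_add_left, mdot_add_right, mdot_add_right,
      mdot_smul_left, mdot_smul_left, mdot_smul_left, mdot_smul_left,
      mdot_smul_right, mdot_smul_right, mdot_smul_right, mdot_smul_right,
      hsph v hv, hSS, hFS, hSF]
    linear_combination (c^2) * hsc
  refine ⟨fun v hv => by rw [hsq v hv]; positivity, ?_⟩
  refine ⟨c * co, -(c * si), by positivity,
    neg_ne_zero.2 (mul_ne_zero hc.ne' hsin), ?_⟩
  intro v hv
  have hmpos : 0 < c * co + c * si * kg v := by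
    have h1 : co + si * kg v = co * (1 + Real.tan ξ * kg v) := by
      rw [Real.tan_eq_sin_div_cos, ← hsidef, ← hcodef]
      field_simp
    have h2 : c * co + c * si * kg v = c * (co * (1 + Real.tan ξ * kg v)) := by
      rw [← h1]; ring
    rw [h2]
    exact mul_pos hc (mul_pos hcos (hpos v hv))
  -- gram facts
  have gFF : mdot (f v) (f v) = 1 := hsph v hv
  have gTT : mdot (deriv f v) (deriv f v) = -1 := htl v hv
  have gFT : mdot (f v) (deriv f v) = 0 := hFT v hv
  have gSS : mdot (lcross (f v) (deriv f v)) (lcross (f v) (deriv f v)) = 1 := by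
    rw [mdot_lcross_lcross, gFT, mdot_comm (deriv f v) (f v), gFT, gFF, gTT]; ring
  have gSF : mdot (lcross (f v) (deriv f v)) (f v) = 0 := by
    rw [← det3_eq, det3_xx]
  have gFS : mdot (f v) (lcross (f v) (deriv f v)) = 0 := by
    rw [mdot_comm]; exact gSF
  -- vector facts
  have vTScr : lcross (deriv f v) (lcross (f v) (deriv f v)) = f v := by
    rw [lcross_triple, mdot_comm (deriv f v) (f v), gFT, gTT]; simp
  have vST : lcross (lcross (f v) (deriv f v)) (deriv f v) = -(f v) := by
    rw [lcross_anticomm, vTScr]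
  -- derivative formulas at v
  have e1 : deriv γ v = c • (co • f v + si • lcross (f v) (deriv f v)) := hd1 v hv
  have e2 : deriv (deriv γ) v = (c * co + c * si * kg v) • deriv f v := key2 v hv
  set μ := deriv (fun w => c * co + c * si * kg w) v with hμdef
  have e3 : deriv (deriv (deriv γ)) v
      = (c * co + c * si * kg v) • deriv (deriv f) v + μ • deriv f v := key3 v hv
  -- the cross product Q
  have hQ : lcross (deriv γ v) (deriv (deriv γ) v)
      = (c * (c * co + c * si * kg v)) •
        (co • lcross (f v) (deriv f v) + (-si) • f v) := by
    rw [e1, e2, lcross_smul_left, lcross_smul_right, lcross_add_left,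
      lcross_smul_left, lcross_smul_left, vST]
    module
  have hQQ : mdot (lcross (deriv γ v) (deriv (deriv γ) v))
      (lcross (deriv γ v) (deriv (deriv γ) v))
      = (c * (c * co + c * si * kg v)) ^ 2 := by
    rw [hQ, mdot_smul_left, mdot_smul_right, mdot_add_left, mdot_add_right,
      mdot_add_right, mdot_smul_left, mdot_smul_left, mdot_smul_left, mdot_smul_left,
      mdot_smul_right, mdot_smul_right, mdot_smul_right, mdot_smul_right,
      gSS, gSF, gFS, gFF]
    linear_combination ((c * (c * co + c * si * kg v)) ^ 2) * hsc
  have hmn : mnorm (lcross (deriv γ v) (deriv (deriv γ) v))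
      = c * (c * co + c * si * kg v) := by
    rw [mnorm, hQQ, abs_of_nonneg (by positivity), Real.sqrt_sq (by positivity)]
  -- the determinant
  have hdetFTF2 : det3 (f v) (deriv f v) (deriv (deriv f) v) = kg v := (hkg2 v).symm
  have hdetSTF2 : det3 (lcross (f v) (deriv f v)) (deriv f v) (deriv (deriv f) v)
      = -1 := by
    rw [hF2eq v hv, det3_add3, det3_smul3, det3_xyx, det3_eq, lcross_anticomm,
      mdot_neg_left, gSS]
    ring
  have hD : det3 (deriv γ v) (deriv (deriv γ) v) (deriv (deriv (deriv γ)) v)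
      = c * (c * co + c * si * kg v) ^ 2 * (co * kg v - si) := by
    rw [e1, e2, e3, det3_smul1, det3_smul2, det3_add3, det3_smul3, det3_smul3,
      det3_yy, det3_add1, det3_smul1, det3_smul1, hdetFTF2, hdetSTF2]
    ring
  -- conclusion
  rw [hK, hT]
  simp only []
  rw [hmn, hD, hsq v hv, Real.sqrt_sq hc.le]
  have hm0 : (c * co + c * si * kg v) ≠ 0 := hmpos.ne'
  have hc0 : c ≠ 0 := hc.ne'
  field_simp
  have hX : co + si * kg v ≠ 0 := fun h => hm0 (by linear_combination c * h)
  rw [div_eq_one_iff_eq hX]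
  linear_combination (co + si * kg v) * hsc
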